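/- Let u : ℝ³ → ℝ be Euclidean C²-smooth and x a non-characteristic point of Σ = {u = 0}. Define for L > 0 the Gaussian curvature of Σ at x associated to the first Schouten–Van Kampen affine connection by K^{Σ,∇}(L) = −(L/2)·r̄_L² + h₁₁h₂₂ − h₁₂h₂₁, with h₁₁ = (l/l_L)(X₁(p̄)+X₂(q̄)), h₁₂ = −(l_L/l)(q̄X₁(r̄_L) − p̄X₂(r̄_L)), h₂₁ = −(l_L/l)(q̄X₁(r̄_L) − p̄X₂(r̄_L)) − (√L/2) − (√L/2)r̄_L², h₂₂ = −(l²/l_L²)(r̄_L p̄ X₁(r/l) + r̄_L q̄ X₂(r/l)) + L^{−1/2}X₃(r̄_L). Then K^{Σ,∇}(L) = K^{Σ,∇,∞} + O(L^{−1/2}) as L → +∞, i.e. there exist C ≥ 0 and L₀ > 0 such that |K^{Σ,∇}(L) − K^{Σ,∇,∞}| ≤ C·L^{−1/2} for all L ≥ L₀, where K^{Σ,∇,∞} = −½( q̄X₁(u_{x₃}/l) − p̄X₂(u_{x₃}/l) ) − u_{x₃}²/(2l²) (all quantities evaluated at x). -/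

import Mathlib

open Filter Real Topology

/-- The horizontal vector field `X₁ = ∂_{x₁} - (x₂/2)∂_{x₃}` acting on a function. -/
noncomputable def X1 (f : ℝ → ℝ → ℝ → ℝ) (x y z : ℝ) : ℝ :=
  deriv (fun s => f s y z) x - (y / 2) * deriv (fun s => f x y s) z

/-- The horizontal vector field `X₂ = ∂_{x₂} + (x₁/2)∂_{x₃}` acting on a function. -/
noncomputable def X2 (f : ℝ → ℝ → ℝ → ℝ) (x y z : ℝ) : ℝ :=
  deriv (fun s => f x s z) y + (x / 2) * deriv (fun s => f x y s) z

/-- The vertical vector field `X₃ = ∂_{x₃}` acting on a function. -/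
noncomputable def X3 (f : ℝ → ℝ → ℝ → ℝ) (x y z : ℝ) : ℝ :=
  deriv (fun s => f x y s) z

/-!
Put `σ = L^{-1/2}`. Then `r̄_L = σ · u_{x₃} / √(l² + σ² u_{x₃}²)`, so every entry of the second
fundamental form is an explicit expression in `σ`, built from `σ ↦ Xᵢ(u_{x₃} / √(l² + σ² u_{x₃}²))`;
these are differentiable in `σ` because `u` is `C²` and the chain rule gives them in closed form.
In `K^{Σ,∇}(L)` the pole `-√L/2 = -1/(2σ)` of `h₂₁` is multiplied by `h₁₂ = O(σ)`, and
`-(L/2) r̄_L²` stays bounded, so `K^{Σ,∇}(L) = Ψ(σ)` for a function `Ψ` differentiable at `0`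
with `Ψ(0) = K^{Σ,∇,∞}`. Differentiability at `0` gives `Ψ(σ) - Ψ(0) = O(σ)`.
-/

theorem DifferentiableAt.exists_abs_sub_le_div_sqrt {Ψ : ℝ → ℝ} (hΨ : DifferentiableAt ℝ Ψ 0) :
    ∃ C : ℝ, 0 ≤ C ∧ ∃ L₀ : ℝ, 0 < L₀ ∧ ∀ L : ℝ, L₀ ≤ L →
      |Ψ (√L)⁻¹ - Ψ 0| ≤ C / √L := by
  obtain ⟨C, hC, hΨC⟩ := hΨ.hasDerivAt.isBigO_sub.exists_nonneg
  have hσ : Tendsto (fun L : ℝ => (√L)⁻¹) atTop (𝓝 0) :=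
    tendsto_inv_atTop_zero.comp tendsto_sqrt_atTop
  obtain ⟨L₁, hL₁⟩ := eventually_atTop.1 (hσ.eventually hΨC.bound)
  refine ⟨C, hC, max L₁ 1, by positivity, fun L hL => ?_⟩
  simpa [div_eq_mul_inv, abs_of_nonneg (Real.sqrt_nonneg L)] using hL₁ L (le_of_max_le_left hL)

theorem hasDerivAt_div_sqrt_sum_sq {P Q T : ℝ → ℝ} {p' q' t' w : ℝ} (c : ℝ)
    (hP : HasDerivAt P p' w) (hQ : HasDerivAt Q q' w) (hT : HasDerivAt T t' w)
    (hPQ : 0 < P w ^ 2 + Q w ^ 2) :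
    HasDerivAt (fun s => T s / √(P s ^ 2 + Q s ^ 2 + c ^ 2 * T s ^ 2))
      ((t' * (P w ^ 2 + Q w ^ 2 + c ^ 2 * T w ^ 2)
          - T w * (P w * p' + Q w * q' + c ^ 2 * T w * t'))
        / ((P w ^ 2 + Q w ^ 2 + c ^ 2 * T w ^ 2) * √(P w ^ 2 + Q w ^ 2 + c ^ 2 * T w ^ 2))) w := by
  have hE : 0 < P w ^ 2 + Q w ^ 2 + c ^ 2 * T w ^ 2 := by positivity
  have hsq : HasDerivAt (fun s => P s ^ 2 + Q s ^ 2 + c ^ 2 * T s ^ 2)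
      (2 * (P w * p' + Q w * q' + c ^ 2 * T w * t')) w := by
    refine (((hP.fun_pow 2).add (hQ.fun_pow 2)).add
      ((hT.fun_pow 2).const_mul (c ^ 2))).congr_deriv ?_
    ring
  refine (hT.fun_div (hsq.sqrt hE.ne') (Real.sqrt_pos.2 hE).ne').congr_deriv ?_
  field_simp
  rw [Real.sq_sqrt hE.le]

theorem differentiable_deriv_div_sqrt_sum_sq {P Q T : ℝ → ℝ} {w : ℝ}
    (hP : DifferentiableAt ℝ P w) (hQ : DifferentiableAt ℝ Q w) (hT : DifferentiableAt ℝ T w)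
    (hPQ : 0 < P w ^ 2 + Q w ^ 2) :
    Differentiable ℝ fun c => deriv (fun s => T s / √(P s ^ 2 + Q s ^ 2 + c ^ 2 * T s ^ 2)) w := by
  simp only [fun c => (hasDerivAt_div_sqrt_sum_sq c hP.hasDerivAt hQ.hasDerivAt hT.hasDerivAt
    hPQ).deriv]
  intro c
  fun_prop (disch := positivity)

section Partials

variable {u : ℝ → ℝ → ℝ → ℝ}

theorem deriv_coord₁_eq_fderiv (hu : Differentiable ℝ fun v : ℝ × ℝ × ℝ => u v.1 v.2.1 v.2.2)
    (a b c : ℝ) :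
    deriv (fun s => u s b c) a
      = fderiv ℝ (fun v : ℝ × ℝ × ℝ => u v.1 v.2.1 v.2.2) (a, b, c) (1, 0, 0) :=
  ((hu _).hasFDerivAt.comp_hasDerivAt a
    ((hasDerivAt_id a).prodMk (hasDerivAt_const a (b, c)))).deriv

theorem deriv_coord₂_eq_fderiv (hu : Differentiable ℝ fun v : ℝ × ℝ × ℝ => u v.1 v.2.1 v.2.2)
    (a b c : ℝ) :
    deriv (fun s => u a s c) b
      = fderiv ℝ (fun v : ℝ × ℝ × ℝ => u v.1 v.2.1 v.2.2) (a, b, c) (0, 1, 0) :=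
  ((hu _).hasFDerivAt.comp_hasDerivAt b
    ((hasDerivAt_const b a).prodMk ((hasDerivAt_id b).prodMk (hasDerivAt_const b c)))).deriv

theorem deriv_coord₃_eq_fderiv (hu : Differentiable ℝ fun v : ℝ × ℝ × ℝ => u v.1 v.2.1 v.2.2)
    (a b c : ℝ) :
    deriv (fun s => u a b s) c
      = fderiv ℝ (fun v : ℝ × ℝ × ℝ => u v.1 v.2.1 v.2.2) (a, b, c) (0, 0, 1) :=
  ((hu _).hasFDerivAt.comp_hasDerivAt c
    ((hasDerivAt_const c a).prodMk ((hasDerivAt_const c b).prodMk (hasDerivAt_id c)))).deriv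

theorem differentiable_uncurry_X1 (hu : ContDiff ℝ 2 fun v : ℝ × ℝ × ℝ => u v.1 v.2.1 v.2.2) :
    Differentiable ℝ fun v : ℝ × ℝ × ℝ => X1 u v.1 v.2.1 v.2.2 := by
  have hD := (hu.fderiv_right (m := 1) (by norm_num)).differentiable one_ne_zero
  simp only [X1, deriv_coord₁_eq_fderiv (hu.differentiable two_ne_zero),
    deriv_coord₃_eq_fderiv (hu.differentiable two_ne_zero)]
  fun_prop

theorem differentiable_uncurry_X2 (hu : ContDiff ℝ 2 fun v : ℝ × ℝ × ℝ => u v.1 v.2.1 v.2.2) :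
    Differentiable ℝ fun v : ℝ × ℝ × ℝ => X2 u v.1 v.2.1 v.2.2 := by
  have hD := (hu.fderiv_right (m := 1) (by norm_num)).differentiable one_ne_zero
  simp only [X2, deriv_coord₂_eq_fderiv (hu.differentiable two_ne_zero),
    deriv_coord₃_eq_fderiv (hu.differentiable two_ne_zero)]
  fun_prop

theorem differentiable_uncurry_X3 (hu : ContDiff ℝ 2 fun v : ℝ × ℝ × ℝ => u v.1 v.2.1 v.2.2) :
    Differentiable ℝ fun v : ℝ × ℝ × ℝ => X3 u v.1 v.2.1 v.2.2 := by
  have hD := (hu.fderiv_right (m := 1) (by norm_num)).differentiable one_ne_zero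
  simp only [X3, deriv_coord₃_eq_fderiv (hu.differentiable two_ne_zero)]
  fun_prop

end Partials

/-- `r̄_L = σ · normalizedX3 u σ` for `σ = L^{-1/2}`, and `u_{x₃}/l = normalizedX3 u 0`. -/
noncomputable def normalizedX3 (u : ℝ → ℝ → ℝ → ℝ) (σ a b c : ℝ) : ℝ :=
  X3 u a b c / √(X1 u a b c ^ 2 + X2 u a b c ^ 2 + σ ^ 2 * X3 u a b c ^ 2)

section Heisenberg

variable {u : ℝ → ℝ → ℝ → ℝ} {x y z : ℝ}

theorem differentiable_X_normalizedX3 (hu : ContDiff ℝ 2 fun v : ℝ × ℝ × ℝ => u v.1 v.2.1 v.2.2)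
    (hpq : 0 < X1 u x y z ^ 2 + X2 u x y z ^ 2) :
    (Differentiable ℝ fun σ => X1 (normalizedX3 u σ) x y z) ∧
      (Differentiable ℝ fun σ => X2 (normalizedX3 u σ) x y z) ∧
      Differentiable ℝ fun σ => X3 (normalizedX3 u σ) x y z := by
  have h₁ := differentiable_uncurry_X1 hu
  have h₂ := differentiable_uncurry_X2 hu
  have h₃ := differentiable_uncurry_X3 hu
  have γ₁ : Differentiable ℝ fun s : ℝ => (s, y, z) := by fun_prop
  have γ₂ : Differentiable ℝ fun s : ℝ => (x, s, z) := by fun_prop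
  have γ₃ : Differentiable ℝ fun s : ℝ => (x, y, s) := by fun_prop
  have d₁ : Differentiable ℝ fun σ => deriv (fun s => normalizedX3 u σ s y z) x :=
    differentiable_deriv_div_sqrt_sum_sq (h₁.comp γ₁ x) (h₂.comp γ₁ x) (h₃.comp γ₁ x) hpq
  have d₂ : Differentiable ℝ fun σ => deriv (fun s => normalizedX3 u σ x s z) y :=
    differentiable_deriv_div_sqrt_sum_sq (h₁.comp γ₂ y) (h₂.comp γ₂ y) (h₃.comp γ₂ y) hpq
  have d₃ : Differentiable ℝ fun σ => deriv (fun s => normalizedX3 u σ x y s) z :=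
    differentiable_deriv_div_sqrt_sum_sq (h₁.comp γ₃ z) (h₂.comp γ₃ z) (h₃.comp γ₃ z) hpq
  exact ⟨d₁.sub (d₃.const_mul _), d₂.add (d₃.const_mul _), d₃⟩

theorem X1_const_mul (k : ℝ) (f : ℝ → ℝ → ℝ → ℝ) :
    X1 (fun a b c => k * f a b c) x y z = k * X1 f x y z := by
  simp only [X1, deriv_const_mul_field]
  ring

theorem X2_const_mul (k : ℝ) (f : ℝ → ℝ → ℝ → ℝ) :
    X2 (fun a b c => k * f a b c) x y z = k * X2 f x y z := by
  simp only [X2, deriv_const_mul_field]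
  ring

theorem X3_const_mul (k : ℝ) (f : ℝ → ℝ → ℝ → ℝ) :
    X3 (fun a b c => k * f a b c) x y z = k * X3 f x y z := by
  simp only [X3, deriv_const_mul_field]

end Heisenberg

/-- With `E = l² + σ² t²` and `Dᵢ σ = Xᵢ (normalizedX3 u σ)` at the point, `h₁₂ = σ M`,
`h₂₂ = σ² N` and `h₂₁ = σ M - 1/(2σ) - σ t²/(2E)`, so this is `-(L/2) r̄_L² + h₁₁ h₂₂ - h₁₂ h₂₁`
with the pole of `h₂₁` cancelled against the factor `σ` of `h₁₂`. -/
noncomputable def curvatureModel (l t A a b : ℝ) (D₁ D₂ D₃ : ℝ → ℝ) (σ : ℝ) : ℝ :=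
  let E := l ^ 2 + σ ^ 2 * t ^ 2
  let M := -(√E / l) * (b * D₁ σ - a * D₂ σ)
  let N := -(l ^ 2 * t / (E * √E)) * (a * D₁ 0 + b * D₂ 0) + D₃ σ
  l / √E * A * σ ^ 2 * N - t ^ 2 / (2 * E) - σ ^ 2 * M ^ 2 + M / 2
    + σ ^ 2 * M * t ^ 2 / (2 * E)

section CurvatureModel

variable {l t A a b σ : ℝ} {D₁ D₂ D₃ : ℝ → ℝ}

theorem curvatureModel_zero (hl : 0 < l) :
    curvatureModel l t A a b D₁ D₂ D₃ 0
      = -(1 / 2) * (b * D₁ 0 - a * D₂ 0) - t ^ 2 / (2 * l ^ 2) := by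
  simp only [curvatureModel]
  rw [zero_pow two_ne_zero, zero_mul, add_zero, Real.sqrt_sq hl.le]
  field_simp
  ring

theorem curvatureModel_eq (hl : 0 < l) (hσ : 0 < σ) :
    let g := √(l ^ 2 + σ ^ 2 * t ^ 2)
    let r := σ * (t / g)
    let h₁₁ := l / g * A
    let h₁₂ := -(g / l) * (b * (σ * D₁ σ) - a * (σ * D₂ σ))
    let h₂₁ := h₁₂ - σ⁻¹ / 2 - σ⁻¹ / 2 * r ^ 2
    let h₂₂ := -(l ^ 2 / g ^ 2) * (r * a * (σ * D₁ 0) + r * b * (σ * D₂ 0)) + σ * (σ * D₃ σ);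
    curvatureModel l t A a b D₁ D₂ D₃ σ = -(σ⁻¹ ^ 2 / 2) * r ^ 2 + h₁₁ * h₂₂ - h₁₂ * h₂₁ := by
  intro g r h₁₁ h₁₂ h₂₁ h₂₂
  have hE : 0 < l ^ 2 + σ ^ 2 * t ^ 2 := by positivity
  have hg2 : g ^ 2 = l ^ 2 + σ ^ 2 * t ^ 2 := Real.sq_sqrt hE.le
  have hg : 0 < g := Real.sqrt_pos.2 hE
  simp only [curvatureModel, r, h₁₁, h₁₂, h₂₁, h₂₂]
  rw [show √(l ^ 2 + σ ^ 2 * t ^ 2) = g from rfl]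
  clear_value g
  rw [← hg2]
  field_simp
  ring

theorem differentiableAt_curvatureModel (hl : 0 < l) (h₁ : DifferentiableAt ℝ D₁ 0)
    (h₂ : DifferentiableAt ℝ D₂ 0) (h₃ : DifferentiableAt ℝ D₃ 0) :
    DifferentiableAt ℝ (curvatureModel l t A a b D₁ D₂ D₃) 0 := by
  unfold curvatureModel
  dsimp only
  fun_prop (disch := positivity)

end CurvatureModel

theorem gaussian_curvature_expansion_first_SvK_general
    (u pb qb uol : ℝ → ℝ → ℝ → ℝ) (rbF rol : ℝ → ℝ → ℝ → ℝ → ℝ)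
    (lL h11 h12 h21 h22 K : ℝ → ℝ) (l0 Kinf x y z : ℝ)
    (hu : ContDiff ℝ 2 (fun v : ℝ × ℝ × ℝ => u v.1 v.2.1 v.2.2))
    (hl0 : l0 = Real.sqrt ((X1 u x y z)^2 + (X2 u x y z)^2))
    (hnc : l0 ≠ 0)
    (huol : ∀ a b c, uol a b c = X3 u a b c / Real.sqrt ((X1 u a b c)^2 + (X2 u a b c)^2))
    (hrbF : ∀ L a b c, rbF L a b c = (X3 u a b c / Real.sqrt L) /
      Real.sqrt ((X1 u a b c)^2 + (X2 u a b c)^2 + (X3 u a b c / Real.sqrt L)^2))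
    (hrol : ∀ L a b c, rol L a b c = (X3 u a b c / Real.sqrt L) /
      Real.sqrt ((X1 u a b c)^2 + (X2 u a b c)^2))
    (hlL : ∀ L, lL L = Real.sqrt ((X1 u x y z)^2 + (X2 u x y z)^2
      + (X3 u x y z / Real.sqrt L)^2))
    (hh11 : ∀ L, h11 L = (l0 / lL L) * (X1 pb x y z + X2 qb x y z))
    (hh12 : ∀ L, h12 L = -(lL L / l0) * (qb x y z * X1 (rbF L) x y z
      - pb x y z * X2 (rbF L) x y z))
    (hh21 : ∀ L, h21 L = -(lL L / l0) * (qb x y z * X1 (rbF L) x y z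
      - pb x y z * X2 (rbF L) x y z) - Real.sqrt L / 2
      - (Real.sqrt L / 2) * (rbF L x y z)^2)
    (hh22 : ∀ L, h22 L = -(l0^2 / (lL L)^2) * (rbF L x y z * pb x y z * X1 (rol L) x y z
      + rbF L x y z * qb x y z * X2 (rol L) x y z)
      + (1 / Real.sqrt L) * X3 (rbF L) x y z)
    (hK : ∀ L, K L = -(L / 2) * (rbF L x y z)^2 + h11 L * h22 L - h12 L * h21 L)
    (hKinf : Kinf = -(1/2) * (qb x y z * X1 uol x y z - pb x y z * X2 uol x y z)
      - (X3 u x y z)^2 / (2 * ((X1 u x y z)^2 + (X2 u x y z)^2))) :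
    ∃ C : ℝ, 0 ≤ C ∧ ∃ L₀ : ℝ, 0 < L₀ ∧ ∀ L : ℝ, L₀ ≤ L →
      |K L - Kinf| ≤ C / Real.sqrt L := by
  have hl : 0 < l0 := (hl0 ▸ Real.sqrt_nonneg _).lt_of_ne' hnc
  have hl2 : X1 u x y z ^ 2 + X2 u x y z ^ 2 = l0 ^ 2 := by
    rw [hl0, Real.sq_sqrt (by positivity)]
  obtain ⟨hD₁, hD₂, hD₃⟩ := differentiable_X_normalizedX3 hu (hl2 ▸ pow_pos hl 2)
  set Ψ := curvatureModel l0 (X3 u x y z) (X1 pb x y z + X2 qb x y z) (pb x y z) (qb x y z)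
    (fun σ => X1 (normalizedX3 u σ) x y z) (fun σ => X2 (normalizedX3 u σ) x y z)
    (fun σ => X3 (normalizedX3 u σ) x y z) with hΨ
  have huol' : uol = normalizedX3 u 0 := funext₃ fun a b c => by simp [huol, normalizedX3]
  have hrb : ∀ L, rbF L = fun a b c => (√L)⁻¹ * normalizedX3 u (√L)⁻¹ a b c :=
    fun L => funext₃ fun a b c => by rw [hrbF, normalizedX3]; ring_nf
  have hro : ∀ L, rol L = fun a b c => (√L)⁻¹ * uol a b c :=
    fun L => funext₃ fun a b c => by rw [hrol, huol]; ring
  have hKΨ : ∀ L, 0 < L → K L = Ψ (√L)⁻¹ := by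
    intro L hL
    obtain ⟨σ, hσ, rfl⟩ : ∃ σ > 0, L = σ⁻¹ ^ 2 := ⟨(√L)⁻¹, by positivity, by simp [hL.le]⟩
    rw [hK, hh11, hh12, hh21, hh22, hlL, hrb, hro, Real.sqrt_sq (by positivity), inv_inv,
      X1_const_mul, X2_const_mul, X3_const_mul, X1_const_mul, X2_const_mul, one_div, inv_inv,
      huol']
    simp only [normalizedX3]
    rw [show (X3 u x y z / σ⁻¹) ^ 2 = σ ^ 2 * X3 u x y z ^ 2 by rw [div_inv_eq_mul]; ring, hl2,
      hΨ, curvatureModel_eq hl hσ]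
  have hKinfΨ : Kinf = Ψ 0 := by
    rw [hKinf, hΨ, curvatureModel_zero hl, huol', hl2]
  obtain ⟨C, hC, L₀, hL₀, hbound⟩ := (differentiableAt_curvatureModel hl
    hD₁.differentiableAt hD₂.differentiableAt hD₃.differentiableAt).exists_abs_sub_le_div_sqrt
  refine ⟨C, hC, L₀, hL₀, fun L hL => ?_⟩
  rw [hKΨ L (hL₀.trans_le hL), hKinfΨ]
  exact hbound L hL

theorem gaussian_curvature_expansion_first_SvK
    (u pb qb uol : ℝ → ℝ → ℝ → ℝ) (rbF rol : ℝ → ℝ → ℝ → ℝ → ℝ)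
    (lL h11 h12 h21 h22 K : ℝ → ℝ) (l0 Kinf x y z : ℝ)
    (hu : ContDiff ℝ 2 (fun v : ℝ × ℝ × ℝ => u v.1 v.2.1 v.2.2))
    (hx : u x y z = 0)
    (hl0 : l0 = Real.sqrt ((X1 u x y z)^2 + (X2 u x y z)^2))
    (hnc : l0 ≠ 0)
    (hpb : ∀ a b c, pb a b c = X1 u a b c / Real.sqrt ((X1 u a b c)^2 + (X2 u a b c)^2))
    (hqb : ∀ a b c, qb a b c = X2 u a b c / Real.sqrt ((X1 u a b c)^2 + (X2 u a b c)^2))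
    (huol : ∀ a b c, uol a b c = X3 u a b c / Real.sqrt ((X1 u a b c)^2 + (X2 u a b c)^2))
    (hrbF : ∀ L a b c, rbF L a b c = (X3 u a b c / Real.sqrt L) /
      Real.sqrt ((X1 u a b c)^2 + (X2 u a b c)^2 + (X3 u a b c / Real.sqrt L)^2))
    (hrol : ∀ L a b c, rol L a b c = (X3 u a b c / Real.sqrt L) /
      Real.sqrt ((X1 u a b c)^2 + (X2 u a b c)^2))
    (hlL : ∀ L, lL L = Real.sqrt ((X1 u x y z)^2 + (X2 u x y z)^2
      + (X3 u x y z / Real.sqrt L)^2))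
    (hh11 : ∀ L, h11 L = (l0 / lL L) * (X1 pb x y z + X2 qb x y z))
    (hh12 : ∀ L, h12 L = -(lL L / l0) * (qb x y z * X1 (rbF L) x y z
      - pb x y z * X2 (rbF L) x y z))
    (hh21 : ∀ L, h21 L = -(lL L / l0) * (qb x y z * X1 (rbF L) x y z
      - pb x y z * X2 (rbF L) x y z) - Real.sqrt L / 2
      - (Real.sqrt L / 2) * (rbF L x y z)^2)
    (hh22 : ∀ L, h22 L = -(l0^2 / (lL L)^2) * (rbF L x y z * pb x y z * X1 (rol L) x y z
      + rbF L x y z * qb x y z * X2 (rol L) x y z)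
      + (1 / Real.sqrt L) * X3 (rbF L) x y z)
    (hK : ∀ L, K L = -(L / 2) * (rbF L x y z)^2 + h11 L * h22 L - h12 L * h21 L)
    (hKinf : Kinf = -(1/2) * (qb x y z * X1 uol x y z - pb x y z * X2 uol x y z)
      - (X3 u x y z)^2 / (2 * ((X1 u x y z)^2 + (X2 u x y z)^2))) :
    ∃ C : ℝ, 0 ≤ C ∧ ∃ L₀ : ℝ, 0 < L₀ ∧ ∀ L : ℝ, L₀ ≤ L →
      |K L - Kinf| ≤ C / Real.sqrt L :=
  gaussian_curvature_expansion_first_SvK_general u pb qb uol rbF rol lL h11 h12 h21 h22 K l0 Kinf x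
    y z hu hl0 hnc huol hrbF hrol hlL hh11 hh12 hh21 hh22 hK hKinf
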